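/- Let a, b ∈ ℝ and let k : ℝ³ → ℝ be the function k(x) = 1 + (3x₁² − 2x₂² − x₃²)/(1+|x|²)² + (|x|⁴/(1+|x|²)³)(b − a/(1+|x|²) − (1−a)/(1+|x|²)²). Then k(0) = 1, ∇k(0) = 0, Δk(0) = 0, ∇(Δk)(0) = 0, the Hessian D²k(0) is invertible, and a₁ := Δ²k(0) + ∇(Δk)(0) · (D²k(0))^{−1} ∇(Δk)(0) = 120(b − 1), where Δ is the Euclidean Laplacian and Δ² its square. -/

import Mathlib

open MeasureTheory Real

/-- The Euclidean Laplacian: sum of second partial derivatives. -/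
noncomputable def lap (u : EuclideanSpace ℝ (Fin 3) → ℝ) (x : EuclideanSpace ℝ (Fin 3)) : ℝ :=
  ∑ i : Fin 3,
    fderiv ℝ (fun z => fderiv ℝ u z (EuclideanSpace.single i 1)) x (EuclideanSpace.single i 1)

/-- The function `k` from the example in the paper. -/
noncomputable def kfun (a b : ℝ) (x : EuclideanSpace ℝ (Fin 3)) : ℝ :=
  1 + (3 * x 0 ^ 2 - 2 * x 1 ^ 2 - x 2 ^ 2) / (1 + ‖x‖ ^ 2) ^ 2 +
    ‖x‖ ^ 4 / (1 + ‖x‖ ^ 2) ^ 3 *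
      (b - a / (1 + ‖x‖ ^ 2) - (1 - a) / (1 + ‖x‖ ^ 2) ^ 2)

/-!
Write `k(x) = q(x) A(|x|²) + B(|x|²)` with `q(x) = 3x₁² - 2x₂² - x₃²`, `A(s) = (1+s)⁻²` and
`B(s) = 1 + s² h(s)`, `h(0) = b - 1`. For any diagonal quadratic form `q = ∑ cᵢ xᵢ²`, the Laplacian
of such a function has the same shape, with `A ↦ 14A' + 4sA''` and `B ↦ 6B' + 4sB'' + 2(∑ cᵢ)A`
(Euler's identity `x · ∇q = 2q` produces the `14 = 2·3 + 8`). Every function of this shape has a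
critical point at `0` with diagonal Hessian `diag(2cᵢA(0) + 2B'(0))`, and at `0` only `B` and its
derivatives survive: here `∑ cᵢ = 0`, so `Δk(0) = 6B'(0) = 0` and `Δ²k(0) = 60B''(0) = 120(b - 1)`.
-/

open Filter Topology
open scoped ContDiff

local notation "ℝ³" => EuclideanSpace ℝ (Fin 3)

local notation "𝐞" j:max => EuclideanSpace.single j (1 : ℝ)

noncomputable section

def diagQuad (c : Fin 3 → ℝ) (x : ℝ³) : ℝ := ∑ i, c i * x i ^ 2

def quadRadial (c : Fin 3 → ℝ) (A B : ℝ → ℝ) (x : ℝ³) : ℝ :=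
  diagQuad c x * A (‖x‖ ^ 2) + B (‖x‖ ^ 2)

/-- Only the values on `[0, ∞)` enter `quadRadial`, and the profiles of `k` are singular at `-1`. -/
def SmoothOnNonneg (A : ℝ → ℝ) : Prop := ∀ s, 0 ≤ s → ContDiffAt ℝ ∞ A s

namespace SmoothOnNonneg

variable {A : ℝ → ℝ}

theorem deriv (hA : SmoothOnNonneg A) : SmoothOnNonneg (deriv A) :=
  fun s hs => (hA s hs).derivWithin (by simp)

theorem hasDerivAt (hA : SmoothOnNonneg A) {s : ℝ} (hs : 0 ≤ s) :
    HasDerivAt A (_root_.deriv A s) s :=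
  ((hA s hs).differentiableAt (by simp)).hasDerivAt

theorem contDiff_comp_normSq (hA : SmoothOnNonneg A) :
    ContDiff ℝ ∞ (fun x : ℝ³ => A (‖x‖ ^ 2)) :=
  contDiff_iff_contDiffAt.2 fun x =>
    (hA _ (by positivity)).comp x (contDiff_norm_sq ℝ).contDiffAt

end SmoothOnNonneg

theorem hasFDerivAt_diagQuad (c : Fin 3 → ℝ) (x : ℝ³) :
    HasFDerivAt (diagQuad c) (∑ i, (2 * c i * x i) • PiLp.proj (𝕜 := ℝ) 2 (fun _ => ℝ) i) x := by
  refine (HasFDerivAt.fun_sum fun i _ =>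
    ((PiLp.hasFDerivAt_apply 2 x i).pow 2).const_mul (c i)).congr_fderiv ?_
  ext v
  simp only [sum_apply, smul_apply, smul_eq_mul]
  exact Finset.sum_congr rfl fun i _ => by simp; ring

theorem innerSL_single (x : ℝ³) (j : Fin 3) : innerSL ℝ x (𝐞 j) = x j := by
  simp [EuclideanSpace.inner_single_right]

variable {c : Fin 3 → ℝ} {A B : ℝ → ℝ}

theorem hasFDerivAt_quadRadial (hA : SmoothOnNonneg A) (hB : SmoothOnNonneg B) (x : ℝ³) :
    HasFDerivAt (quadRadial c A B)
      (A (‖x‖ ^ 2) • (∑ i, (2 * c i * x i) • PiLp.proj (𝕜 := ℝ) 2 (fun _ => ℝ) i) +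
        (diagQuad c x * deriv A (‖x‖ ^ 2) + deriv B (‖x‖ ^ 2)) • (2 • innerSL ℝ x)) x := by
  have hs : 0 ≤ ‖x‖ ^ 2 := by positivity
  have hnormSq := (hasStrictFDerivAt_norm_sq x).hasFDerivAt
  have hA' := (hA.hasDerivAt hs).comp_hasFDerivAt x hnormSq
  have hB' := (hB.hasDerivAt hs).comp_hasFDerivAt x hnormSq
  refine (((hasFDerivAt_diagQuad c x).mul hA').add hB').congr_fderiv ?_
  ext v
  simp only [add_apply, smul_apply, smul_eq_mul, Function.comp_apply]
  ring

theorem fderiv_quadRadial_single (hA : SmoothOnNonneg A) (hB : SmoothOnNonneg B) (x : ℝ³)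
    (j : Fin 3) :
    fderiv ℝ (quadRadial c A B) x (𝐞 j) =
      x j * quadRadial c (fun s => 2 * deriv A s) (fun s => 2 * c j * A s + 2 * deriv B s) x := by
  rw [(hasFDerivAt_quadRadial hA hB x).fderiv]
  simp [quadRadial, innerSL_single]
  ring

theorem fderiv_coord_mul_single {g : ℝ³ → ℝ} {x : ℝ³} (hg : DifferentiableAt ℝ g x)
    (i j : Fin 3) :
    fderiv ℝ (fun z => z j * g z) x (𝐞 i) = (𝐞 i) j * g x + x j * fderiv ℝ g x (𝐞 i) := by
  have hj := PiLp.hasFDerivAt_apply (𝕜 := ℝ) 2 x j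
  rw [fderiv_fun_mul hj.differentiableAt hg, hj.fderiv]
  simp only [add_apply, smul_apply, smul_eq_mul, PiLp.proj_apply]
  ring

theorem fderiv_fderiv_quadRadial_single (hA : SmoothOnNonneg A) (hB : SmoothOnNonneg B)
    (x : ℝ³) (i j : Fin 3) :
    fderiv ℝ (fun z => fderiv ℝ (quadRadial c A B) z (𝐞 j)) x (𝐞 i) =
      (𝐞 i) j * (2 * c j * A (‖x‖ ^ 2) + 2 * diagQuad c x * deriv A (‖x‖ ^ 2) +
          2 * deriv B (‖x‖ ^ 2)) +
        4 * x i * x j * ((c i + c j) * deriv A (‖x‖ ^ 2) +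
          diagQuad c x * deriv (deriv A) (‖x‖ ^ 2) + deriv (deriv B) (‖x‖ ^ 2)) := by
  have hA' : SmoothOnNonneg (fun s => 2 * deriv A s) := fun s hs => by
    have := hA.deriv s hs
    fun_prop
  have hB' : SmoothOnNonneg (fun s => 2 * c j * A s + 2 * deriv B s) := fun s hs => by
    have := hA s hs
    have := hB.deriv s hs
    fun_prop
  have hs : 0 ≤ ‖x‖ ^ 2 := by positivity
  have hdB' : deriv (fun s => 2 * c j * A s + 2 * deriv B s) (‖x‖ ^ 2) =
      2 * c j * deriv A (‖x‖ ^ 2) + 2 * deriv (deriv B) (‖x‖ ^ 2) :=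
    (((hA.hasDerivAt hs).const_mul _).add ((hB.deriv.hasDerivAt hs).const_mul 2)).deriv
  simp_rw [fderiv_quadRadial_single hA hB]
  rw [fderiv_coord_mul_single (hasFDerivAt_quadRadial hA' hB' x).differentiableAt,
    fderiv_quadRadial_single hA' hB']
  simp only [quadRadial, hdB', deriv_const_mul_field']
  ring

def lapQuadPart (A : ℝ → ℝ) (s : ℝ) : ℝ := 14 * deriv A s + 4 * s * deriv (deriv A) s

def lapRadialPart (c : Fin 3 → ℝ) (A B : ℝ → ℝ) (s : ℝ) : ℝ :=
  6 * deriv B s + 4 * s * deriv (deriv B) s + 2 * (∑ i, c i) * A s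

theorem SmoothOnNonneg.lapQuadPart (hA : SmoothOnNonneg A) : SmoothOnNonneg (lapQuadPart A) :=
  fun s hs => by
    have := hA.deriv s hs
    have := hA.deriv.deriv s hs
    unfold _root_.lapQuadPart
    fun_prop

theorem SmoothOnNonneg.lapRadialPart (hA : SmoothOnNonneg A) (hB : SmoothOnNonneg B) :
    SmoothOnNonneg (lapRadialPart c A B) := fun s hs => by
  have := hA s hs
  have := hB.deriv s hs
  have := hB.deriv.deriv s hs
  unfold _root_.lapRadialPart
  fun_prop

theorem lap_quadRadial (hA : SmoothOnNonneg A) (hB : SmoothOnNonneg B) :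
    lap (quadRadial c A B) = quadRadial c (lapQuadPart A) (lapRadialPart c A B) := by
  funext x
  have hs : ‖x‖ ^ 2 = x 0 ^ 2 + x 1 ^ 2 + x 2 ^ 2 := by
    simp [EuclideanSpace.norm_sq_eq, Fin.sum_univ_three]
  simp only [lap, fderiv_fderiv_quadRadial_single hA hB, Fin.sum_univ_three, quadRadial, diagQuad,
    lapQuadPart, lapRadialPart, PiLp.single_apply, if_true, hs]
  ring

theorem contDiff_quadRadial (hA : SmoothOnNonneg A) (hB : SmoothOnNonneg B) :
    ContDiff ℝ ∞ (quadRadial c A B) := by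
  have hq : ContDiff ℝ ∞ (diagQuad c) := by unfold diagQuad; fun_prop
  exact (hq.mul hA.contDiff_comp_normSq).add hB.contDiff_comp_normSq

@[simp]
theorem diagQuad_zero : diagQuad c 0 = 0 := by simp [diagQuad]

@[simp]
theorem quadRadial_zero : quadRadial c A B 0 = B 0 := by simp [quadRadial]

theorem gradient_quadRadial_zero (hA : SmoothOnNonneg A) (hB : SmoothOnNonneg B) :
    gradient (quadRadial c A B) 0 = 0 := by
  simp [gradient, (hasFDerivAt_quadRadial hA hB 0).fderiv]

theorem lap_quadRadial_zero (hA : SmoothOnNonneg A) (hB : SmoothOnNonneg B) :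
    lap (quadRadial c A B) 0 = 6 * deriv B 0 + 2 * (∑ i, c i) * A 0 := by
  simp [lap_quadRadial hA hB, lapRadialPart]

theorem gradient_lap_quadRadial_zero (hA : SmoothOnNonneg A) (hB : SmoothOnNonneg B) :
    gradient (lap (quadRadial c A B)) 0 = 0 := by
  rw [lap_quadRadial hA hB]
  exact gradient_quadRadial_zero hA.lapQuadPart (hA.lapRadialPart hB)

theorem lap_lap_quadRadial_zero (hA : SmoothOnNonneg A) (hB : SmoothOnNonneg B) :
    lap (lap (quadRadial c A B)) 0 = 60 * deriv (deriv B) 0 + 40 * (∑ i, c i) * deriv A 0 := by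
  have h0 : (0 : ℝ) ≤ 0 := le_rfl
  have hB₁ : HasDerivAt (lapRadialPart c A B)
      (10 * deriv (deriv B) 0 + 2 * (∑ i, c i) * deriv A 0) 0 :=
    ((((hB.deriv.hasDerivAt h0).const_mul 6).fun_add
      (((hasDerivAt_id' (0 : ℝ)).const_mul 4).fun_mul (hB.deriv.deriv.hasDerivAt h0))).fun_add
      ((hA.hasDerivAt h0).const_mul (2 * ∑ i, c i))).congr_deriv (by ring)
  rw [lap_quadRadial hA hB, lap_quadRadial_zero hA.lapQuadPart (hA.lapRadialPart hB), hB₁.deriv,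
    lapQuadPart]
  ring

theorem fderiv_fderiv_apply {E F : Type*} [NormedAddCommGroup E] [NormedSpace ℝ E]
    [NormedAddCommGroup F] [NormedSpace ℝ F] {f : E → F} {x : E}
    (hf : DifferentiableAt ℝ (fderiv ℝ f) x) (v w : E) :
    fderiv ℝ (fderiv ℝ f) x v w = fderiv ℝ (fun y => fderiv ℝ f y w) x v := by
  rw [(hf.hasFDerivAt.clm_apply (hasFDerivAt_const w x)).fderiv]
  simp

theorem iteratedFDeriv_two_quadRadial_zero (hA : SmoothOnNonneg A) (hB : SmoothOnNonneg B)
    (i j : Fin 3) :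
    iteratedFDeriv ℝ 2 (quadRadial c A B) 0 ![𝐞 i, 𝐞 j] =
      Matrix.diagonal (fun i => 2 * c i * A 0 + 2 * deriv B 0) i j := by
  have hdf : DifferentiableAt ℝ (fderiv ℝ (quadRadial c A B)) 0 :=
    ((contDiff_quadRadial hA hB).fderiv_right (m := 1) (by norm_cast)).differentiable one_ne_zero 0
  rw [iteratedFDeriv_two_apply]
  change fderiv ℝ (fderiv ℝ _) 0 (𝐞 i) (𝐞 j) = _
  rw [fderiv_fderiv_apply hdf, fderiv_fderiv_quadRadial_single hA hB]
  by_cases hij : i = j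
  · subst hij; simp
  · simp [hij, Ne.symm hij]

theorem deriv_sq_mul_zero {h : ℝ → ℝ} (hh : DifferentiableAt ℝ h 0) :
    deriv (fun s => s ^ 2 * h s) 0 = 0 := by
  simpa using ((hasDerivAt_pow 2 (0 : ℝ)).fun_mul hh.hasDerivAt).deriv

theorem deriv_deriv_sq_mul_zero {h : ℝ → ℝ} (hh : ContDiffAt ℝ 2 h 0) :
    deriv (deriv fun s => s ^ 2 * h s) 0 = 2 * h 0 := by
  have hd : (deriv fun s => s ^ 2 * h s) =ᶠ[𝓝 0] fun s => 2 * s * h s + s ^ 2 * deriv h s := by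
    filter_upwards [hh.eventually (by simp)] with s hs
    simpa using ((hasDerivAt_pow 2 s).fun_mul (hs.differentiableAt (by simp)).hasDerivAt).deriv
  have hh' : DifferentiableAt ℝ (deriv h) 0 :=
    (hh.derivWithin (m := 1) (by norm_cast)).differentiableAt one_ne_zero
  rw [hd.deriv_eq]
  simpa using ((((hasDerivAt_id' (0 : ℝ)).const_mul 2).fun_mul
    (hh.differentiableAt (by simp)).hasDerivAt).fun_add
    ((hasDerivAt_pow 2 (0 : ℝ)).fun_mul hh'.hasDerivAt)).deriv

def kfunA (s : ℝ) : ℝ := 1 / (1 + s) ^ 2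

def kfunTail (a b s : ℝ) : ℝ := (b - a / (1 + s) - (1 - a) / (1 + s) ^ 2) / (1 + s) ^ 3

def kfunB (a b s : ℝ) : ℝ := 1 + s ^ 2 * kfunTail a b s

theorem kfun_eq_quadRadial (a b : ℝ) : kfun a b = quadRadial ![3, -2, -1] kfunA (kfunB a b) := by
  funext x
  simp [kfun, quadRadial, diagQuad, kfunA, kfunB, kfunTail, Fin.sum_univ_three]
  ring

theorem contDiffAt_kfunTail (a b : ℝ) {s : ℝ} (hs : 0 ≤ s) : ContDiffAt ℝ ∞ (kfunTail a b) s := by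
  unfold kfunTail
  fun_prop (disch := positivity)

theorem smoothOnNonneg_kfunA : SmoothOnNonneg kfunA := fun s hs => by
  unfold kfunA
  fun_prop (disch := positivity)

theorem smoothOnNonneg_kfunB (a b : ℝ) : SmoothOnNonneg (kfunB a b) := fun s hs => by
  have := contDiffAt_kfunTail a b hs
  unfold kfunB
  fun_prop

theorem deriv_kfunB_zero (a b : ℝ) : deriv (kfunB a b) 0 = 0 := by
  unfold kfunB
  rw [deriv_const_add,
    deriv_sq_mul_zero ((contDiffAt_kfunTail a b le_rfl).differentiableAt (by simp))]

theorem deriv_deriv_kfunB_zero (a b : ℝ) : deriv (deriv (kfunB a b)) 0 = 2 * (b - 1) := by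
  unfold kfunB
  rw [deriv_const_add',
    deriv_deriv_sq_mul_zero ((contDiffAt_kfunTail a b le_rfl).of_le (by norm_cast))]
  norm_num [kfunTail]

theorem iteratedFDeriv_two_kfun_zero (a b : ℝ) (i j : Fin 3) :
    iteratedFDeriv ℝ 2 (kfun a b) 0 ![𝐞 i, 𝐞 j] = Matrix.diagonal ![6, -4, -2] i j := by
  rw [kfun_eq_quadRadial, iteratedFDeriv_two_quadRadial_zero smoothOnNonneg_kfunA
    (smoothOnNonneg_kfunB a b), deriv_kfunB_zero]
  congr 2
  ext i
  fin_cases i <;> norm_num [kfunA]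

end

theorem stmt18 (a b : ℝ) (H : Matrix (Fin 3) (Fin 3) ℝ)
    (hH : ∀ i j, H i j = iteratedFDeriv ℝ 2 (kfun a b) 0
      ![EuclideanSpace.single i 1, EuclideanSpace.single j 1]) :
    kfun a b 0 = 1 ∧
    gradient (kfun a b) 0 = 0 ∧
    lap (kfun a b) 0 = 0 ∧
    gradient (lap (kfun a b)) 0 = 0 ∧
    IsUnit H ∧
    lap (lap (kfun a b)) 0 +
        dotProduct (fun i => gradient (lap (kfun a b)) 0 i)
          (H⁻¹.mulVec fun i => gradient (lap (kfun a b)) 0 i)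
      = 120 * (b - 1) := by
  have hA := smoothOnNonneg_kfunA
  have hB := smoothOnNonneg_kfunB a b
  have htrace : ∑ i, (![3, -2, -1] : Fin 3 → ℝ) i = 0 := by simp [Fin.sum_univ_three]; norm_num
  have hgrad := gradient_lap_quadRadial_zero (c := ![3, -2, -1]) hA hB
  have hH' : H = Matrix.diagonal ![6, -4, -2] :=
    Matrix.ext fun i j => (hH i j).trans (iteratedFDeriv_two_kfun_zero a b i j)
  rw [kfun_eq_quadRadial]
  refine ⟨by simp [kfunB], gradient_quadRadial_zero hA hB, ?_, hgrad, ?_, ?_⟩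
  · rw [lap_quadRadial_zero hA hB, deriv_kfunB_zero, htrace]; ring
  · rw [hH', Matrix.isUnit_diagonal, Pi.isUnit_iff]
    intro i
    fin_cases i <;> norm_num
  · rw [lap_lap_quadRadial_zero hA hB, deriv_deriv_kfunB_zero, htrace, hgrad]
    simp only [mul_zero, zero_mul, add_zero, PiLp.zero_apply, zero_dotProduct']
    ring
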